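/- arXiv:2305.16408 — 6 statements merged into one kernel-verified Lean document; each statement's English description precedes it below -/
import Mathlib

section
/- Let F : ℝ^d → ℝ^d be linear and bijective, ε ∈ (0, π], and x, y ∈ ℝ^d \ {0} with y ∈ Con[x; ε] and ‖x‖ = ‖y‖. Then there exists a linear map Q : ℝ^d → ℝ^d such that ‖Q‖ ≤ ε‖F‖, (F + Q) F⁻¹ x = y, and F + Q is bijective. -/
open Real

set_option maxHeartbeats 1000000
local notation "⟪" x ", " y "⟫" => @inner ℝ _ _ x y

lemma exists_rotation (d : ℕ) (x y : EuclideanSpace ℝ (Fin d)) (hx : x ≠ 0) (hy : y ≠ 0)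
    (hnorm : ‖x‖ = ‖y‖) :
    ∃ V : EuclideanSpace ℝ (Fin d) →L[ℝ] EuclideanSpace ℝ (Fin d),
      ‖V - 1‖ ≤ InnerProductGeometry.angle x y ∧ V x = y ∧ Function.Bijective V := by
  have hθ0 : 0 ≤ InnerProductGeometry.angle x y := InnerProductGeometry.angle_nonneg x y
  have hθπ : InnerProductGeometry.angle x y ≤ π := InnerProductGeometry.angle_le_pi x y
  have hxn : (0:ℝ) < ‖x‖ := norm_pos_iff.2 hx
  rcases eq_or_lt_of_le hθ0 with h0 | h0
  · -- θ = 0 : y = x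
    obtain ⟨-, r, hr, hyr⟩ := InnerProductGeometry.angle_eq_zero_iff.1 h0.symm
    have hnr : ‖y‖ = r * ‖x‖ := by rw [hyr, norm_smul, Real.norm_eq_abs, abs_of_pos hr]
    have hr1 : r = 1 := by rw [hnr] at hnorm; nlinarith
    refine ⟨1, ?_, ?_, Function.bijective_id⟩
    · rw [sub_self, norm_zero]; exact h0.le
    · rw [hyr, hr1, one_smul]; rfl
  rcases eq_or_lt_of_le hθπ with hπ | hπ
  · -- θ = π : y = -x
    obtain ⟨-, r, hr, hyr⟩ := InnerProductGeometry.angle_eq_pi_iff.1 hπ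
    have hnr : ‖y‖ = -r * ‖x‖ := by rw [hyr, norm_smul, Real.norm_eq_abs, abs_of_neg hr]
    have hr1 : r = -1 := by rw [hnr] at hnorm; nlinarith
    have hcoe : ∀ z, (-1 : EuclideanSpace ℝ (Fin d) →L[ℝ] EuclideanSpace ℝ (Fin d)) z = -z :=
      fun z => rfl
    refine ⟨-1, ?_, ?_, ?_⟩
    · rw [hπ]
      refine ContinuousLinearMap.opNorm_le_bound _ Real.pi_pos.le (fun z => ?_)
      have : (-1 - 1 : EuclideanSpace ℝ (Fin d) →L[ℝ] EuclideanSpace ℝ (Fin d)) z = -z - z := by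
        simp [hcoe]
      rw [this]
      have hpi : (2:ℝ) ≤ π := by linarith [Real.pi_gt_three]
      have : ‖-z - z‖ ≤ 2 * ‖z‖ := by
        calc ‖-z - z‖ ≤ ‖-z‖ + ‖z‖ := norm_sub_le _ _
        _ = 2 * ‖z‖ := by rw [norm_neg]; ring
      nlinarith [norm_nonneg z]
    · rw [hcoe, hyr, hr1]; module
    · have : ((-1 : EuclideanSpace ℝ (Fin d) →L[ℝ] EuclideanSpace ℝ (Fin d)) :
          EuclideanSpace ℝ (Fin d) → EuclideanSpace ℝ (Fin d)) = Neg.neg := funext hcoe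
      rw [this]; exact neg_involutive.bijective
  · -- general case: 0 < θ < π
    have hyn : (0:ℝ) < ‖y‖ := norm_pos_iff.2 hy
    obtain ⟨θ, hθdef⟩ : ∃ t, t = InnerProductGeometry.angle x y := ⟨_, rfl⟩
    rw [← hθdef] at hθ0 hθπ h0 hπ ⊢
    obtain ⟨c, hcdef⟩ : ∃ t, t = Real.cos θ := ⟨_, rfl⟩
    obtain ⟨s, hsdef⟩ : ∃ t, t = Real.sin θ := ⟨_, rfl⟩
    have hs : 0 < s := hsdef ▸ Real.sin_pos_of_pos_of_lt_pi h0 hπ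
    have hc2 : c ^ 2 + s ^ 2 = 1 := by
      rw [hcdef, hsdef, add_comm]; exact Real.sin_sq_add_cos_sq θ
    have hxy : ⟪x, y⟫ = ‖x‖ * ‖y‖ * c := by
      rw [hcdef, hθdef, InnerProductGeometry.cos_angle]
      field_simp
    obtain ⟨e₁, he1def⟩ : ∃ e : EuclideanSpace ℝ (Fin d), e = ‖x‖⁻¹ • x := ⟨_, rfl⟩
    have h11 : ⟪e₁, e₁⟫ = 1 := by
      rw [he1def, real_inner_smul_left, real_inner_smul_right, real_inner_self_eq_norm_sq]
      field_simp
    have he1x : ⟪e₁, x⟫ = ‖x‖ := by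
      rw [he1def, real_inner_smul_left, real_inner_self_eq_norm_sq]
      field_simp
    have he1y : ⟪e₁, y⟫ = ‖x‖ * c := by
      rw [he1def, real_inner_smul_left, hxy, ← hnorm]
      field_simp
    obtain ⟨y', hy'def⟩ : ∃ v : EuclideanSpace ℝ (Fin d), v = y - (‖x‖ * c) • e₁ := ⟨_, rfl⟩
    have h1y' : ⟪e₁, y'⟫ = 0 := by
      rw [hy'def, inner_sub_right, real_inner_smul_right, h11, he1y]; ring
    have hy'1 : ⟪y', e₁⟫ = 0 := by rw [real_inner_comm e₁ y']; exact h1y'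
    have hy'sq : ‖y'‖ ^ 2 = ‖x‖ ^ 2 * s ^ 2 := by
      have h' : ⟪y', y'⟫ = ‖y‖ ^ 2 - (‖x‖ * c) ^ 2 := by
        simp only [hy'def, inner_sub_left, inner_sub_right, real_inner_smul_left,
          real_inner_smul_right]
        rw [real_inner_comm e₁ y, he1y, h11, real_inner_self_eq_norm_sq]
        ring
      rw [← real_inner_self_eq_norm_sq, h', ← hnorm]
      nlinarith
    have hy'pos : 0 < ‖y'‖ := by
      have h1 : (0:ℝ) < ‖y'‖ ^ 2 := by
        rw [hy'sq]; exact mul_pos (pow_pos hxn 2) (pow_pos hs 2)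
      refine lt_of_le_of_ne (norm_nonneg y') (fun h => ?_)
      rw [← h] at h1
      norm_num at h1
    have hy'norm : ‖y'‖ = ‖x‖ * s := by
      have h2 : (0:ℝ) < ‖x‖ * s := mul_pos hxn hs
      have h3 : ‖y'‖ ^ 2 = (‖x‖ * s) ^ 2 := by rw [hy'sq]; ring
      have h4 := congrArg Real.sqrt h3
      rwa [Real.sqrt_sq (norm_nonneg _), Real.sqrt_sq h2.le] at h4
    have hy'ne : ‖y'‖ ≠ 0 := hy'pos.ne'
    obtain ⟨e₂, he2def⟩ : ∃ e : EuclideanSpace ℝ (Fin d), e = ‖y'‖⁻¹ • y' := ⟨_, rfl⟩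
    have h22 : ⟪e₂, e₂⟫ = 1 := by
      rw [he2def, real_inner_smul_left, real_inner_smul_right, real_inner_self_eq_norm_sq]
      field_simp
    have h12 : ⟪e₁, e₂⟫ = 0 := by
      rw [he2def, real_inner_smul_right, h1y']; ring
    have h21 : ⟪e₂, e₁⟫ = 0 := by rw [real_inner_comm e₁ e₂]; exact h12
    have he2x : ⟪e₂, x⟫ = 0 := by
      rw [he2def, real_inner_smul_left, hy'def, inner_sub_left, real_inner_smul_left,
        real_inner_comm x y, hxy, he1x, ← hnorm]
      ring
    have hye : y = (‖x‖ * c) • e₁ + ‖y'‖ • e₂ := by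
      rw [he2def, smul_inv_smul₀ hy'ne, hy'def]
      abel
    have hxe : x = ‖x‖ • e₁ := by
      rw [he1def, smul_inv_smul₀ hxn.ne']
    -- the rotation
    obtain ⟨V, hVdef⟩ : ∃ W : EuclideanSpace ℝ (Fin d) →L[ℝ] EuclideanSpace ℝ (Fin d),
        W = 1 + (c - 1) • ((innerSL ℝ e₁).smulRight e₁ + (innerSL ℝ e₂).smulRight e₂)
          + s • ((innerSL ℝ e₁).smulRight e₂ - (innerSL ℝ e₂).smulRight e₁) := ⟨_, rfl⟩
    have hV : ∀ z, V z = z + (c - 1) • (⟪e₁, z⟫ • e₁ + ⟪e₂, z⟫ • e₂)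
        + s • (⟪e₁, z⟫ • e₂ - ⟪e₂, z⟫ • e₁) := by
      intro z
      rw [hVdef]
      simp [ContinuousLinearMap.smulRight_apply]
    have hVx : V x = y := by
      rw [hV, he1x, he2x, hye, hy'norm]
      nth_rewrite 1 [hxe]
      module
    have hsq : ∀ α β : ℝ, ‖α • e₁ + β • e₂‖ ^ 2 = α ^ 2 + β ^ 2 := by
      intro α β
      rw [← real_inner_self_eq_norm_sq]
      simp only [inner_add_left, inner_add_right, real_inner_smul_left, real_inner_smul_right]
      rw [h11, h22, h12, h21]
      ring
    have hbessel : ∀ z : EuclideanSpace ℝ (Fin d),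
        ⟪e₁, z⟫ ^ 2 + ⟪e₂, z⟫ ^ 2 ≤ ‖z‖ ^ 2 := by
      intro z
      obtain ⟨a, hadef⟩ : ∃ t, t = ⟪e₁, z⟫ := ⟨_, rfl⟩
      obtain ⟨b, hbdef⟩ : ∃ t, t = ⟪e₂, z⟫ := ⟨_, rfl⟩
      rw [← hadef, ← hbdef]
      obtain ⟨r, hrdef⟩ : ∃ v : EuclideanSpace ℝ (Fin d), v = z - a • e₁ - b • e₂ := ⟨_, rfl⟩
      have hz : z = (a • e₁ + b • e₂) + r := by rw [hrdef]; abel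
      have hir : ⟪a • e₁ + b • e₂, r⟫ = 0 := by
        simp only [hrdef, inner_add_left, inner_sub_right, real_inner_smul_left,
          real_inner_smul_right]
        rw [h11, h22, h12, h21, hadef, hbdef, real_inner_comm z e₁, real_inner_comm z e₂]
        ring
      have hpyth : ‖z‖ ^ 2 = (a ^ 2 + b ^ 2) + ‖r‖ ^ 2 := by
        conv_lhs => rw [hz]
        rw [← real_inner_self_eq_norm_sq, real_inner_add_add_self, hir,
          real_inner_self_eq_norm_sq, real_inner_self_eq_norm_sq, hsq]
        ring
      nlinarith [sq_nonneg ‖r‖]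
    have hVnorm : ‖V - 1‖ ≤ θ := by
      refine ContinuousLinearMap.opNorm_le_bound _ hθ0 (fun z => ?_)
      have hVz : (V - 1) z = ((c - 1) * ⟪e₁, z⟫ - s * ⟪e₂, z⟫) • e₁
          + ((c - 1) * ⟪e₂, z⟫ + s * ⟪e₁, z⟫) • e₂ := by
        have h' : (V - 1) z = V z - z := by
          rw [ContinuousLinearMap.sub_apply, ContinuousLinearMap.one_apply]
        rw [h', hV]
        module
      have hsqz : ‖(V - 1) z‖ ^ 2 ≤ θ ^ 2 * ‖z‖ ^ 2 := by
        rw [hVz, hsq]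
        have hb := hbessel z
        have hcos : 1 - θ ^ 2 / 2 ≤ c := hcdef ▸ Real.one_sub_sq_div_two_le_cos
        have hab : (0:ℝ) ≤ ⟪e₁, z⟫ ^ 2 + ⟪e₂, z⟫ ^ 2 := by positivity
        nlinarith [sq_nonneg θ, sq_nonneg ‖z‖, mul_nonneg hab (sq_nonneg θ)]
      have h1 : (0:ℝ) ≤ θ * ‖z‖ := mul_nonneg hθ0 (norm_nonneg z)
      nlinarith [norm_nonneg ((V - 1) z)]
    have hVker : ∀ z, V z = 0 → z = 0 := by
      intro z hz
      rw [hV] at hz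
      obtain ⟨a, hadef⟩ : ∃ t, t = ⟪e₁, z⟫ := ⟨_, rfl⟩
      obtain ⟨b, hbdef⟩ : ∃ t, t = ⟪e₂, z⟫ := ⟨_, rfl⟩
      rw [← hadef, ← hbdef] at hz
      have h1 : c * a - s * b = 0 := by
        have h' := congrArg (fun v => ⟪e₁, v⟫) hz
        simp only [inner_add_right, inner_sub_right, real_inner_smul_right,
          inner_zero_right] at h'
        rw [h11, h12, ← hadef] at h'
        linarith [h']
      have h2 : s * a + c * b = 0 := by
        have h' := congrArg (fun v => ⟪e₂, v⟫) hz
        simp only [inner_add_right, inner_sub_right, real_inner_smul_right,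
          inner_zero_right] at h'
        rw [h22, h21, ← hbdef] at h'
        linarith [h']
      have ha : a = 0 := by linear_combination c * h1 + s * h2 - a * hc2
      have hb : b = 0 := by linear_combination (-s) * h1 + c * h2 - b * hc2
      rw [ha, hb] at hz
      simpa using hz
    have hVinj : Function.Injective V := by
      intro z z' h
      have h0' : V (z - z') = 0 := by rw [map_sub, h, sub_self]
      exact sub_eq_zero.mp (hVker _ h0')
    have hVsurj : Function.Surjective V := by
      have h' : Function.Injective (V : EuclideanSpace ℝ (Fin d) →ₗ[ℝ]
          EuclideanSpace ℝ (Fin d)) := hVinj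
      exact LinearMap.injective_iff_surjective.mp h'
    exact ⟨V, hVnorm, hVx, hVinj, hVsurj⟩

/-- The cone `Con[x; ε]` of vectors forming an angle at most `ε` with `x`, together with `0`. -/
def ConeAngle {d : ℕ} (x : EuclideanSpace ℝ (Fin d)) (ε : ℝ) : Set (EuclideanSpace ℝ (Fin d)) :=
  {y | y ≠ 0 ∧ InnerProductGeometry.angle x y ≤ ε} ∪ {0}

/-- if `F` is linear and bijective, `ε ∈ (0, π]`, `x, y ≠ 0` with
`y ∈ Con[x; ε]` and `‖x‖ = ‖y‖`, then there is a linear `Q` with `‖Q‖ ≤ ε‖F‖`,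
`(F + Q) F⁻¹ x = y` (i.e. `(F + Q) w = y` whenever `F w = x`) and `F + Q` bijective. -/
theorem rotation_perturbation_forward (d : ℕ)
    (F : EuclideanSpace ℝ (Fin d) →L[ℝ] EuclideanSpace ℝ (Fin d))
    (hF : Function.Bijective F)
    (ε : ℝ) (hε : ε ∈ Set.Ioc 0 π)
    (x y : EuclideanSpace ℝ (Fin d)) (hx : x ≠ 0) (hy : y ≠ 0)
    (hcone : y ∈ ConeAngle x ε) (hnorm : ‖x‖ = ‖y‖) :
    ∃ Q : EuclideanSpace ℝ (Fin d) →L[ℝ] EuclideanSpace ℝ (Fin d),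
      ‖Q‖ ≤ ε * ‖F‖ ∧ (∀ w, F w = x → (F + Q) w = y) ∧ Function.Bijective (F + Q) := by
  have hangle : InnerProductGeometry.angle x y ≤ ε := by
    rcases hcone with h | h
    · exact h.2
    · exact absurd h hy
  obtain ⟨V, hVn, hVx, hVb⟩ := exists_rotation d x y hx hy hnorm
  refine ⟨(V - 1) * F, ?_, ?_, ?_⟩
  · calc ‖(V - 1) * F‖ ≤ ‖V - 1‖ * ‖F‖ := norm_mul_le _ _
      _ ≤ ε * ‖F‖ := by
        apply mul_le_mul_of_nonneg_right (hVn.trans hangle) (norm_nonneg F)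
  · intro w hw
    have hFQ : F + (V - 1) * F = V * F := by rw [sub_mul, one_mul]; abel
    rw [hFQ, ContinuousLinearMap.mul_apply, hw, hVx]
  · have hFQ : F + (V - 1) * F = V * F := by rw [sub_mul, one_mul]; abel
    rw [hFQ]
    have : ((V * F : EuclideanSpace ℝ (Fin d) →L[ℝ] EuclideanSpace ℝ (Fin d)) :
        EuclideanSpace ℝ (Fin d) → EuclideanSpace ℝ (Fin d)) = (V : _ → _) ∘ (F : _ → _) := rfl
    rw [this]
    exact hVb.comp hF
end

section
/- Let F : ℝ^d → ℝ^d be linear and bijective, ε ∈ (0, π], and x, y ∈ ℝ^d \ {0} with y ∈ Con[x; ε] and ‖x‖ = ‖y‖. Then there exists a linear map Q : ℝ^d → ℝ^d such that ‖Q‖ ≤ ε‖F‖, (F + Q) y = F x, and F + Q is bijective. -/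
open Real

open scoped RealInnerProductSpace in
/-- A rank-one perturbation of the identity is bijective when `1 + ⟪w, v⟫ ≠ 0`. -/
lemma rank_one_perturb_bijective {E : Type*} [NormedAddCommGroup E] [InnerProductSpace ℝ E]
    (w v : E) (h : 1 + ⟪w, v⟫ ≠ 0) :
    Function.Bijective (fun z : E => z + ⟪w, z⟫ • v) := by
  set c : ℝ := ⟪w, v⟫ with hc
  refine Function.bijective_iff_has_inverse.mpr
    ⟨fun z => z - (⟪w, z⟫ / (1 + c)) • v, fun z => ?_, fun z => ?_⟩
  · simp only [inner_add_right, real_inner_smul_right, ← hc]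
    have key : (⟪w, z⟫ + ⟪w, z⟫ * c) / (1 + c) = ⟪w, z⟫ := by
      field_simp
    rw [key]
    abel
  · simp only [inner_sub_right, real_inner_smul_right, ← hc]
    have key : ⟪w, z⟫ - ⟪w, z⟫ / (1 + c) * c = ⟪w, z⟫ / (1 + c) := by
      field_simp; ring
    rw [key]
    abel

open scoped RealInnerProductSpace in
/-- Chord length bound: if `‖x‖ = ‖y‖` then `‖x - y‖ ≤ angle x y * ‖y‖`. -/
lemma chord_le_angle_mul_norm {E : Type*} [NormedAddCommGroup E] [InnerProductSpace ℝ E]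
    (x y : E) (hnorm : ‖x‖ = ‖y‖) :
    ‖x - y‖ ≤ InnerProductGeometry.angle x y * ‖y‖ := by
  set θ := InnerProductGeometry.angle x y with hθ
  have hθ0 : 0 ≤ θ := InnerProductGeometry.angle_nonneg x y
  have hinner : Real.cos θ * (‖x‖ * ‖y‖) = ⟪x, y⟫ :=
    InnerProductGeometry.cos_angle_mul_norm_mul_norm x y
  have hsq : ‖x - y‖ ^ 2 = 2 * ‖y‖ ^ 2 * (1 - Real.cos θ) := by
    have := @norm_sub_sq_real E _ _ x y
    rw [this, ← hinner, hnorm]; ring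
  have hcos : 1 - Real.cos θ ≤ θ ^ 2 / 2 := by
    have := Real.one_sub_sq_div_two_le_cos (x := θ)
    linarith
  have h2 : ‖x - y‖ ^ 2 ≤ (θ * ‖y‖) ^ 2 := by
    rw [hsq]
    have hy2 : (0:ℝ) ≤ ‖y‖ ^ 2 := sq_nonneg _
    nlinarith
  have h3 : 0 ≤ θ * ‖y‖ := mul_nonneg hθ0 (norm_nonneg _)
  nlinarith [norm_nonneg (x - y)]

open scoped RealInnerProductSpace in
/-- Auxiliary construction: given `w` with `⟪w, y⟫ = 1` and `1 + ⟪w, x - y⟫ ≠ 0` and a norm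
bound, we get the desired perturbation. -/
lemma perturb_of_functional {d : ℕ}
    (F : EuclideanSpace ℝ (Fin d) →L[ℝ] EuclideanSpace ℝ (Fin d))
    (hF : Function.Bijective F) (ε : ℝ)
    (x y w : EuclideanSpace ℝ (Fin d))
    (hwy : ⟪w, y⟫ = 1) (hdet : 1 + ⟪w, x - y⟫ ≠ 0)
    (hwn : ‖w‖ * ‖x - y‖ ≤ ε) :
    ∃ Q : EuclideanSpace ℝ (Fin d) →L[ℝ] EuclideanSpace ℝ (Fin d),
      ‖Q‖ ≤ ε * ‖F‖ ∧ (F + Q) y = F x ∧ Function.Bijective (F + Q) := by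
  set P : EuclideanSpace ℝ (Fin d) →L[ℝ] EuclideanSpace ℝ (Fin d) :=
    (innerSL ℝ w).smulRight (x - y) with hP
  have hPapp : ∀ z, P z = ⟪w, z⟫ • (x - y) := fun z => rfl
  refine ⟨F.comp P, ?_, ?_, ?_⟩
  · calc ‖F.comp P‖ ≤ ‖F‖ * ‖P‖ := ContinuousLinearMap.opNorm_comp_le F P
    _ = ‖F‖ * (‖w‖ * ‖x - y‖) := by
        rw [hP, ContinuousLinearMap.norm_smulRight_apply, innerSL_apply_norm]
    _ ≤ ‖F‖ * ε := by
        have := norm_nonneg F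
        exact mul_le_mul_of_nonneg_left hwn this
    _ = ε * ‖F‖ := mul_comm _ _
  · have : y + P y = x := by rw [hPapp, hwy, one_smul]; abel
    calc (F + F.comp P) y = F (y + P y) := by
          simp [ContinuousLinearMap.add_apply, map_add]
    _ = F x := by rw [this]
  · have hbij : Function.Bijective (fun z : EuclideanSpace ℝ (Fin d) => z + ⟪w, z⟫ • (x - y)) :=
      rank_one_perturb_bijective w (x - y) hdet
    have heq : ⇑(F + F.comp P) =
        ⇑F ∘ (fun z : EuclideanSpace ℝ (Fin d) => z + ⟪w, z⟫ • (x - y)) := by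
      funext z
      simp [hPapp, map_add]
    rw [heq]
    exact hF.comp hbij

open scoped RealInnerProductSpace in
/-- if `F` is linear and bijective, `ε ∈ (0, π]`, `x, y ≠ 0` with
`y ∈ Con[x; ε]` and `‖x‖ = ‖y‖`, then there is a linear `Q` with `‖Q‖ ≤ ε‖F‖`,
`(F + Q) y = F x` and `F + Q` bijective. -/
theorem rotation_perturbation_backward (d : ℕ)
    (F : EuclideanSpace ℝ (Fin d) →L[ℝ] EuclideanSpace ℝ (Fin d))
    (hF : Function.Bijective F)
    (ε : ℝ) (hε : ε ∈ Set.Ioc 0 π)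
    (x y : EuclideanSpace ℝ (Fin d)) (hx : x ≠ 0) (hy : y ≠ 0)
    (hcone : y ∈ ConeAngle x ε) (hnorm : ‖x‖ = ‖y‖) :
    ∃ Q : EuclideanSpace ℝ (Fin d) →L[ℝ] EuclideanSpace ℝ (Fin d),
      ‖Q‖ ≤ ε * ‖F‖ ∧ (F + Q) y = F x ∧ Function.Bijective (F + Q) := by
  have hθε : InnerProductGeometry.angle x y ≤ ε := by
    rcases hcone with h | h
    · exact h.2
    · exact absurd h hy
  have hyn : (0:ℝ) < ‖y‖ := norm_pos_iff.mpr hy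
  have hyy : ⟪y, y⟫ = ‖y‖ ^ 2 := real_inner_self_eq_norm_sq y
  have hxx : ⟪x, x⟫ = ‖y‖ ^ 2 := by rw [real_inner_self_eq_norm_sq, hnorm]
  have hchord : ‖x - y‖ ≤ ε * ‖y‖ :=
    (chord_le_angle_mul_norm x y hnorm).trans
      (mul_le_mul_of_nonneg_right hθε hyn.le)
  by_cases hip : ⟪x, y⟫ = 0
  -- Orthogonal case: angle is π/2, so ε ≥ π/2.
  · have hangle : InnerProductGeometry.angle x y = π / 2 :=
      InnerProductGeometry.inner_eq_zero_iff_angle_eq_pi_div_two x y |>.mp hip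
    have hεhalf : π / 2 ≤ ε := hangle ▸ hθε
    set w : EuclideanSpace ℝ (Fin d) :=
      (‖y‖ ^ 2)⁻¹ • y + (3 * ‖y‖ ^ 2)⁻¹ • x with hw
    have hyx : ⟪y, x⟫ = 0 := by rw [real_inner_comm]; exact hip
    have hwy : ⟪w, y⟫ = 1 := by
      rw [hw, inner_add_left, real_inner_smul_left, real_inner_smul_left, hyy, hip]
      field_simp
      ring
    have hwx : ⟪w, x⟫ = 1 / 3 := by
      rw [hw, inner_add_left, real_inner_smul_left, real_inner_smul_left, hxx, hyx]
      field_simp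
      ring
    have hdet : 1 + ⟪w, x - y⟫ ≠ 0 := by
      rw [inner_sub_right, hwy, hwx]
      norm_num
    have hwnorm2 : ‖w‖ ^ 2 = (10 / 9) / ‖y‖ ^ 2 := by
      rw [← real_inner_self_eq_norm_sq, hw]
      simp only [inner_add_left, inner_add_right, real_inner_smul_left,
        real_inner_smul_right, hyy, hxx, hip, hyx]
      field_simp
      ring
    have hvnorm2 : ‖x - y‖ ^ 2 = 2 * ‖y‖ ^ 2 := by
      rw [← real_inner_self_eq_norm_sq]
      simp only [inner_sub_left, inner_sub_right, hyy, hxx, hip, hyx]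
      ring
    have hwn : ‖w‖ * ‖x - y‖ ≤ ε := by
      have hsq : (‖w‖ * ‖x - y‖) ^ 2 = 20 / 9 := by
        rw [mul_pow, hwnorm2, hvnorm2]
        field_simp
        ring
      have hpi : (3:ℝ) < π := Real.pi_gt_three
      have hε2 : (20 / 9 : ℝ) ≤ ε ^ 2 := by nlinarith
      nlinarith [mul_nonneg (norm_nonneg w) (norm_nonneg (x - y)), hε.1]
    exact perturb_of_functional F hF ε x y w hwy hdet hwn
  -- Generic case: use `w = y / ‖y‖²`.
  · set w : EuclideanSpace ℝ (Fin d) := (‖y‖ ^ 2)⁻¹ • y with hw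
    have hwy : ⟪w, y⟫ = 1 := by
      rw [hw, real_inner_smul_left, hyy]
      field_simp
    have hwx : ⟪w, x⟫ = ⟪x, y⟫ / ‖y‖ ^ 2 := by
      rw [hw, real_inner_smul_left, real_inner_comm y x]
      field_simp
    have hdet : 1 + ⟪w, x - y⟫ ≠ 0 := by
      rw [inner_sub_right, hwy, hwx]
      have : 1 + (⟪x, y⟫ / ‖y‖ ^ 2 - 1) = ⟪x, y⟫ / ‖y‖ ^ 2 := by ring
      rw [this]
      exact div_ne_zero hip (by positivity)
    have hwnorm : ‖w‖ = ‖y‖⁻¹ := by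
      rw [hw, norm_smul]
      rw [norm_inv, Real.norm_eq_abs, abs_of_nonneg (sq_nonneg _), sq]
      field_simp
    have hwn : ‖w‖ * ‖x - y‖ ≤ ε := by
      rw [hwnorm]
      rw [inv_mul_le_iff₀ hyn] at *
      calc ‖x - y‖ ≤ ε * ‖y‖ := hchord
      _ = ‖y‖ * ε := mul_comm _ _
    exact perturb_of_functional F hF ε x y w hwy hdet hwn
end

section
/- Let B ∈ 𝓛^Lya(ℕ, ℝ^{k×k}) with lower Bohl exponent β_B(ℝ^k) ≤ −δ < 0, and let (ε_ℓ) be a decreasing null sequence of positive reals. Then there exists ((s_ℓ, τ_ℓ)) in ℕ×ℕ with τ₀ ≥ 2, τ_ℓ < s_ℓ < τ_{ℓ+1}, s_ℓ − τ_ℓ → ∞, (1/(s_ℓ − τ_ℓ)) ln(2/sin ε_ℓ) < ε_ℓ, and ‖Φ_B(τ_ℓ, s_ℓ)‖⁻¹ ≤ e^{(−δ + ε_ℓ)(s_ℓ − τ_ℓ)} for all ℓ. -/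
/-!
Since `β̲_B(ℝ^k) ≤ -δ`, for every `ε > 0` and every `N` there are times `N < m` with
`n - m > N` and a nonzero `x₀` whose growth rate from `m` to `n` is below `-δ + ε`. As
`‖Φ_B(m,n)‖⁻¹ = ‖Φ_B(n,m)⁻¹‖⁻¹ ≤ ‖Φ_B(n,m) y‖ / ‖y‖` for every `y ≠ 0`, this gives
`‖Φ_B(m,n)‖⁻¹ ≤ e^{(-δ+ε)(n-m)}`. Taking `ε = ε_ℓ` and `N` beyond `s_{ℓ-1}`, `ℓ` and
`ln(2 / sin ε_ℓ) / ε_ℓ` produces `(τ_ℓ, s_ℓ)` recursively.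
-/

open Real Filter

noncomputable section

variable {d : ℕ}

/-- Shorthand for `ℝ^d` with the Euclidean norm. -/
abbrev Euc (d : ℕ) := EuclideanSpace ℝ (Fin d)

/-- Forward product `fwd A m k = A(m+k−1) ⋯ A(m)` of a sequence of invertible matrices. -/
def fwd (A : ℕ → (Euc d ≃L[ℝ] Euc d)) (m : ℕ) : ℕ → (Euc d ≃L[ℝ] Euc d)
  | 0 => ContinuousLinearEquiv.refl ℝ (Euc d)
  | k + 1 => (fwd A m k).trans (A (m + k))

/-- The transition matrix `Φ_A(n,m)`: `A(n−1)⋯A(m)` for `n ≥ m`, and `Φ_A(m,n)⁻¹` for `n < m`. -/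
def Phi (A : ℕ → (Euc d ≃L[ℝ] Euc d)) (n m : ℕ) : Euc d ≃L[ℝ] Euc d :=
  if m ≤ n then fwd A m (n - m) else (fwd A n (m - n)).symm

/-- A sequence of invertible matrices is a Lyapunov sequence if it and its pointwise
inverse are bounded. -/
def IsLyapunov (A : ℕ → (Euc d ≃L[ℝ] Euc d)) : Prop :=
  (∃ C, ∀ n, ‖(A n : Euc d →L[ℝ] Euc d)‖ ≤ C) ∧
  (∃ C, ∀ n, ‖((A n).symm : Euc d →L[ℝ] Euc d)‖ ≤ C)

/-- The upper Bohl exponent `β̄_A(x₀)` of a (nonzero) vector `x₀`. -/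
def upperBohl (A : ℕ → (Euc d ≃L[ℝ] Euc d)) (x0 : Euc d) : ℝ :=
  ⨅ N : ℕ, sSup {r : ℝ | ∃ n m : ℕ, n - m > N ∧ m > N ∧
    r = ((n : ℝ) - m)⁻¹ * Real.log (‖Phi A n 0 x0‖ / ‖Phi A m 0 x0‖)}

/-- The lower Bohl exponent `β̲_A(x₀)` of a (nonzero) vector `x₀`. -/
def lowerBohl (A : ℕ → (Euc d ≃L[ℝ] Euc d)) (x0 : Euc d) : ℝ :=
  ⨆ N : ℕ, sInf {r : ℝ | ∃ n m : ℕ, n - m > N ∧ m > N ∧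
    r = ((n : ℝ) - m)⁻¹ * Real.log (‖Phi A n 0 x0‖ / ‖Phi A m 0 x0‖)}

/-- The upper Bohl exponent `β̄_A(ℝ^d)` of the full space. -/
def upperBohlFull (A : ℕ → (Euc d ≃L[ℝ] Euc d)) : ℝ :=
  ⨅ N : ℕ, sSup {r : ℝ | ∃ n m : ℕ, n - m > N ∧ m > N ∧ ∃ x0 : Euc d, x0 ≠ 0 ∧
    r = ((n : ℝ) - m)⁻¹ * Real.log (‖Phi A n 0 x0‖ / ‖Phi A m 0 x0‖)}

/-- The lower Bohl exponent `β̲_A(ℝ^d)` of the full space. -/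
def lowerBohlFull (A : ℕ → (Euc d ≃L[ℝ] Euc d)) : ℝ :=
  ⨆ N : ℕ, sInf {r : ℝ | ∃ n m : ℕ, n - m > N ∧ m > N ∧ ∃ x0 : Euc d, x0 ≠ 0 ∧
    r = ((n : ℝ) - m)⁻¹ * Real.log (‖Phi A n 0 x0‖ / ‖Phi A m 0 x0‖)}

/-- The system `x(n+1) = A(n)x(n)` has a Bohl dichotomy. -/
def BohlDichotomy (A : ℕ → (Euc d ≃L[ℝ] Euc d)) : Prop :=
  ∃ L1 L2 : Submodule ℝ (Euc d), IsCompl L1 L2 ∧ ∃ α > (0 : ℝ), ∃ C1 C2 : Euc d → ℝ,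
    (∀ x, 0 < C1 x ∧ 0 < C2 x) ∧
    (∀ x0 ∈ L1, ∀ m n : ℕ, m ≤ n →
      ‖Phi A n 0 x0‖ ≤ C1 x0 * Real.exp (-α * ((n : ℝ) - m)) * ‖Phi A m 0 x0‖) ∧
    (∀ x0 ∈ L2, ∀ m n : ℕ, m ≤ n →
      ‖Phi A n 0 x0‖ ≥ C2 x0 * Real.exp (α * ((n : ℝ) - m)) * ‖Phi A m 0 x0‖)

/-- The system `x(n+1) = A(n)x(n)` has an exponential dichotomy. -/
def ExpDichotomy (A : ℕ → (Euc d ≃L[ℝ] Euc d)) : Prop :=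
  ∃ L1 L2 : Submodule ℝ (Euc d), IsCompl L1 L2 ∧ ∃ α > (0 : ℝ), ∃ K > (0 : ℝ),
    (∀ x0 ∈ L1, ∀ m n : ℕ, m ≤ n →
      ‖Phi A n 0 x0‖ ≤ K * Real.exp (-α * ((n : ℝ) - m)) * ‖Phi A m 0 x0‖) ∧
    (∀ x0 ∈ L2, ∀ m n : ℕ, m ≤ n →
      ‖Phi A n 0 x0‖ ≥ K⁻¹ * Real.exp (α * ((n : ℝ) - m)) * ‖Phi A m 0 x0‖)

lemma fwd_add (A : ℕ → (Euc d ≃L[ℝ] Euc d)) (m a b : ℕ) :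
    fwd A m (a + b) = (fwd A m a).trans (fwd A (m + a) b) := by
  induction b with
  | zero => rfl
  | succ b ih =>
    ext x
    simp [fwd, ih, Nat.add_assoc]

lemma Phi_zero_apply_of_le (A : ℕ → (Euc d ≃L[ℝ] Euc d)) {m n : ℕ} (h : m ≤ n) (x : Euc d) :
    Phi A n 0 x = Phi A n m (Phi A m 0 x) := by
  obtain ⟨t, rfl⟩ := Nat.exists_eq_add_of_le h
  simp [Phi, fwd_add A 0 m t]

lemma Phi_of_lt (A : ℕ → (Euc d ≃L[ℝ] Euc d)) {m n : ℕ} (h : m < n) :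
    Phi A m n = (Phi A n m).symm := by
  simp [Phi, Nat.not_le.2 h, h.le]

lemma ContinuousLinearEquiv.inv_norm_symm_le_div {E : Type*} [NormedAddCommGroup E]
    [NormedSpace ℝ E] (T : E ≃L[ℝ] E) {y : E} (hy : y ≠ 0) :
    ‖(T.symm : E →L[ℝ] E)‖⁻¹ ≤ ‖T y‖ / ‖y‖ := by
  have hratio : ‖y‖ / ‖T y‖ ≤ ‖(T.symm : E →L[ℝ] E)‖ := by
    simpa using (T.symm : E →L[ℝ] E).ratio_le_opNorm (T y)
  have hpos : 0 < ‖y‖ / ‖T y‖ := by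
    have : T y ≠ 0 := by simpa using hy
    positivity
  simpa using inv_anti₀ hpos hratio

lemma Phi_inv_norm_le_growth_ratio (A : ℕ → (Euc d ≃L[ℝ] Euc d)) {m n : ℕ} (h : m < n)
    {x0 : Euc d} (hx0 : x0 ≠ 0) :
    ‖(Phi A m n : Euc d →L[ℝ] Euc d)‖⁻¹ ≤ ‖Phi A n 0 x0‖ / ‖Phi A m 0 x0‖ := by
  rw [Phi_of_lt A h, Phi_zero_apply_of_le A h.le]
  exact (Phi A n m).inv_norm_symm_le_div (by simpa using hx0)

/-- The hypothesis `c < 0` rules out the junk values `sInf ∅ = 0` and `⨆ = 0` of an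
unbounded family. -/
lemma exists_mem_lt_of_iSup_sInf_le {ι : Type*} {S : ι → Set ℝ} {c c' : ℝ} (hc : c < 0)
    (h : ⨆ i, sInf (S i) ≤ c) (i : ι) (hcc' : c < c') : ∃ r ∈ S i, r < c' := by
  have hbdd : BddAbove (Set.range fun i => sInf (S i)) := by
    by_contra hb
    rw [Real.iSup_of_not_bddAbove hb] at h
    linarith
  have hle : sInf (S i) ≤ c := (le_ciSup hbdd i).trans h
  by_contra! hge
  rcases (S i).eq_empty_or_nonempty with hempty | hne
  · rw [hempty, Real.sInf_empty] at hle
    linarith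
  · linarith [le_csInf hne hge]

lemma exists_Phi_inv_norm_le_of_lowerBohlFull_le (A : ℕ → (Euc d ≃L[ℝ] Euc d)) {c c' : ℝ}
    (hc : c < 0) (h : lowerBohlFull A ≤ c) (hcc' : c < c') (N : ℕ) :
    ∃ m n : ℕ, N < m ∧ N < n - m ∧
      ‖(Phi A m n : Euc d →L[ℝ] Euc d)‖⁻¹ ≤ Real.exp (c' * ((n : ℝ) - m)) := by
  obtain ⟨r, ⟨n, m, hgap, hm, x0, hx0, rfl⟩, hr⟩ := exists_mem_lt_of_iSup_sInf_le hc h N hcc'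
  have hmn : m < n := by omega
  have hlen : (0 : ℝ) < (n : ℝ) - m := sub_pos.2 (by exact_mod_cast hmn)
  have hratio : 0 < ‖Phi A n 0 x0‖ / ‖Phi A m 0 x0‖ := by
    have : Phi A m 0 x0 ≠ 0 := by simpa using hx0
    have : Phi A n 0 x0 ≠ 0 := by simpa using hx0
    positivity
  refine ⟨m, n, hm, hgap, (Phi_inv_norm_le_growth_ratio A hmn hx0).trans ?_⟩
  rw [← Real.exp_log hratio, Real.exp_le_exp]
  rw [inv_mul_lt_iff₀ hlen] at hr
  linarith

lemma exists_interlacing_of_forall_exists_gap (P : ℕ → ℕ → ℕ → Prop) (L : ℕ → ℕ)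
    (h : ∀ ℓ N, ∃ τ s, N < τ ∧ N < s - τ ∧ P ℓ τ s) :
    ∃ τ s : ℕ → ℕ, (∀ ℓ, L ℓ < τ ℓ ∧ L ℓ < s ℓ - τ ℓ ∧ P ℓ (τ ℓ) (s ℓ)) ∧
      ∀ ℓ, s ℓ < τ (ℓ + 1) := by
  choose τF sF hτF hgapF hPF using h
  let g : ℕ → ℕ × ℕ := fun ℓ => Nat.rec (τF 0 (L 0), sF 0 (L 0))
    (fun j p => (τF (j + 1) (max (L (j + 1)) p.2), sF (j + 1) (max (L (j + 1)) p.2))) ℓ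
  have hg : ∀ ℓ, ∃ N, L ℓ ≤ N ∧ g ℓ = (τF ℓ N, sF ℓ N) := by
    rintro (_ | j)
    · exact ⟨L 0, le_rfl, rfl⟩
    · exact ⟨_, le_max_left _ _, rfl⟩
  refine ⟨fun ℓ => (g ℓ).1, fun ℓ => (g ℓ).2, fun ℓ => ?_, fun ℓ => ?_⟩
  · obtain ⟨N, hLN, hgN⟩ := hg ℓ
    simp only [hgN]
    exact ⟨hLN.trans_lt (hτF ℓ N), hLN.trans_lt (hgapF ℓ N), hPF ℓ N⟩
  · exact (le_max_right _ _).trans_lt (hτF (ℓ + 1) _)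

lemma inv_mul_lt_of_ceil_div_lt {a e : ℝ} {D : ℕ} (he : 0 < e) (hD : ⌈a / e⌉₊ < D) :
    (D : ℝ)⁻¹ * a < e := by
  have hDpos : (0 : ℝ) < D := by exact_mod_cast (Nat.zero_le _).trans_lt hD
  rw [inv_mul_lt_iff₀ hDpos, ← div_lt_iff₀ he]
  exact Nat.lt_of_ceil_lt hD

theorem exponential_decay_on_subsequence_general (k : ℕ)
    (B : ℕ → (Euc k ≃L[ℝ] Euc k))
    (δ : ℝ) (hδ : 0 < δ) (hBohl : lowerBohlFull B ≤ -δ)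
    (ε : ℕ → ℝ) (hpos : ∀ ℓ, 0 < ε ℓ) :
    ∃ s τ : ℕ → ℕ,
      2 ≤ τ 0 ∧
      (∀ ℓ, τ ℓ < s ℓ ∧ s ℓ < τ (ℓ + 1)) ∧
      Tendsto (fun ℓ => s ℓ - τ ℓ) atTop atTop ∧
      (∀ ℓ, ((s ℓ : ℝ) - τ ℓ)⁻¹ * Real.log (2 / Real.sin (ε ℓ)) < ε ℓ) ∧
      ∀ ℓ, ‖(Phi B (τ ℓ) (s ℓ) : Euc k →L[ℝ] Euc k)‖⁻¹ ≤
        Real.exp ((-δ + ε ℓ) * ((s ℓ : ℝ) - τ ℓ)) := by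
  obtain ⟨τ, s, hbound, hinter⟩ := exists_interlacing_of_forall_exists_gap
    (fun ℓ τ s => ‖(Phi B τ s : Euc k →L[ℝ] Euc k)‖⁻¹ ≤
      Real.exp ((-δ + ε ℓ) * ((s : ℝ) - τ)))
    (fun ℓ => max (ℓ + 2) ⌈Real.log (2 / Real.sin (ε ℓ)) / ε ℓ⌉₊)
    (fun ℓ => exists_Phi_inv_norm_le_of_lowerBohlFull_le B (neg_lt_zero.2 hδ) hBohl
      (lt_add_of_pos_right _ (hpos ℓ)))
  have hlt : ∀ ℓ, τ ℓ < s ℓ := fun ℓ => by have := (hbound ℓ).2.1; omega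
  refine ⟨s, τ, ?_, fun ℓ => ⟨hlt ℓ, hinter ℓ⟩, ?_, fun ℓ => ?_, fun ℓ => (hbound ℓ).2.2⟩
  · have := (hbound 0).1
    omega
  · refine tendsto_atTop_mono (fun ℓ => show ℓ ≤ s ℓ - τ ℓ from ?_) tendsto_id
    have := (hbound ℓ).2.1
    omega
  · rw [← Nat.cast_sub (hlt ℓ).le]
    exact inv_mul_lt_of_ceil_div_lt (hpos ℓ) (le_max_right _ _ |>.trans_lt (hbound ℓ).2.1)

/-- if `B` is a Lyapunov sequence with `β̲_B(ℝ^k) ≤ −δ < 0` and `(ε_ℓ)` is a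
decreasing null sequence of positive reals, then there are `((s_ℓ, τ_ℓ))` with `τ₀ ≥ 2`,
`τ_ℓ < s_ℓ < τ_{ℓ+1}`, `s_ℓ − τ_ℓ → ∞`, `(1/(s_ℓ−τ_ℓ)) ln(2/sin ε_ℓ) < ε_ℓ` and
`‖Φ_B(τ_ℓ, s_ℓ)‖⁻¹ ≤ e^{(−δ+ε_ℓ)(s_ℓ−τ_ℓ)}`. -/
theorem exponential_decay_on_subsequence (k : ℕ)
    (B : ℕ → (Euc k ≃L[ℝ] Euc k)) (hB : IsLyapunov B)
    (δ : ℝ) (hδ : 0 < δ) (hBohl : lowerBohlFull B ≤ -δ)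
    (ε : ℕ → ℝ) (hpos : ∀ ℓ, 0 < ε ℓ) (hanti : Antitone ε)
    (hlim : Tendsto ε atTop (nhds 0)) :
    ∃ s τ : ℕ → ℕ,
      2 ≤ τ 0 ∧
      (∀ ℓ, τ ℓ < s ℓ ∧ s ℓ < τ (ℓ + 1)) ∧
      Tendsto (fun ℓ => s ℓ - τ ℓ) atTop atTop ∧
      (∀ ℓ, ((s ℓ : ℝ) - τ ℓ)⁻¹ * Real.log (2 / Real.sin (ε ℓ)) < ε ℓ) ∧
      ∀ ℓ, ‖(Phi B (τ ℓ) (s ℓ) : Euc k →L[ℝ] Euc k)‖⁻¹ ≤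
        Real.exp ((-δ + ε ℓ) * ((s ℓ : ℝ) - τ ℓ)) :=
  exponential_decay_on_subsequence_general k B δ hδ hBohl ε hpos
end
end

section
/- Let A ∈ 𝓛^Lya(ℕ, ℝ^{d×d}) and let L be a k-dimensional subspace of ℝ^d. Let U(n) be the orthogonal matrices obtained by Gram–Schmidt orthonormalization of the columns of Φ_A(n,0)[l₁ … l_d], where {l₁,…,l_k} is a basis of L extended to a basis {l₁,…,l_d} of ℝ^d. Then B(n) := U(n+1)ᵀ A(n) U(n) is upper triangular for every n, and B ∈ 𝓛^Lya(ℕ, ℝ^{d×d}). -/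
open Real Filter

noncomputable section

variable {d : ℕ}

instance (d : ℕ) : WellFoundedLT (Fin d) := inferInstance

open RealInnerProductSpace in
lemma aux_inner_bound {d : ℕ} (T : Euc d →L[ℝ] Euc d) (x y : Euc d)
    (hx : ‖x‖ = 1) (hy : ‖y‖ = 1) : |⟪x, T y⟫| ≤ ‖T‖ := by
  calc |⟪x, T y⟫| ≤ ‖x‖ * ‖T y‖ := abs_real_inner_le_norm _ _
    _ ≤ 1 * (‖T‖ * ‖y‖) := by
        rw [hx]; exact mul_le_mul_of_nonneg_left (T.le_opNorm _) zero_le_one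
    _ = ‖T‖ := by rw [hy]; ring

open RealInnerProductSpace in
/-- upper triangularization.  Let `A` be a Lyapunov sequence, `L` a
`k`-dimensional subspace with basis `l₁,…,l_k` extended to a basis `l` of `ℝ^d`, and let
`u n = (ū₁(n),…,ū_d(n))` be the Gram–Schmidt orthonormalization of `Φ_A(n,0)l₁,…,Φ_A(n,0)l_d`
(the columns of the orthogonal matrix `U(n)`).  Then the matrix
`B(n) = U(n+1)ᵀ A(n) U(n)`, with entries `B(n)ᵢⱼ = ⟪ūᵢ(n+1), A(n) ūⱼ(n)⟫`, is upper
triangular for every `n`, and `B` is a Lyapunov sequence (each `B(n)` invertible, `B` and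
`B⁻¹` bounded). -/
theorem upper_triangular_normal_form (d k : ℕ) (hk : k ≤ d)
    (A : ℕ → (Euc d ≃L[ℝ] Euc d)) (hA : IsLyapunov A)
    (l : Module.Basis (Fin d) ℝ (Euc d))
    (L : Submodule ℝ (Euc d))
    (hL : L = Submodule.span ℝ (l '' {i : Fin d | (i : ℕ) < k}))
    (u : ℕ → Fin d → Euc d)
    (hu : ∀ n, u n = InnerProductSpace.gramSchmidtNormed ℝ (fun i : Fin d => Phi A n 0 (l i)))
    (B : ℕ → Matrix (Fin d) (Fin d) ℝ)
    (hB : ∀ n i j, B n i j = ⟪u (n + 1) i, A n (u n j)⟫) :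
    (∀ n, ∀ i j : Fin d, j < i → B n i j = 0) ∧
    (∀ n, IsUnit (B n)) ∧
    (∃ C : ℝ, ∀ n i j, |B n i j| ≤ C) ∧
    (∃ C : ℝ, ∀ n i j, |(B n)⁻¹ i j| ≤ C) := by
    -- the families being orthonormalized
  set v : ℕ → Fin d → Euc d := fun n i => Phi A n 0 (l i) with hv
  have hind : ∀ n, LinearIndependent ℝ (v n) := by
    intro n
    exact l.linearIndependent.map' (Phi A n 0).toLinearEquiv.toLinearMap
      (Phi A n 0).toLinearEquiv.ker
  have hrec : ∀ n (x : Euc d), Phi A (n + 1) 0 x = A n (Phi A n 0 x) := by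
    intro n x
    simp [Phi, fwd]
  have hcard : Module.finrank ℝ (Euc d) = Fintype.card (Fin d) := by simp
  set b : ℕ → OrthonormalBasis (Fin d) ℝ (Euc d) :=
    fun n => InnerProductSpace.gramSchmidtOrthonormalBasis hcard (v n) with hb
  have hbu : ∀ n i, b n i = u n i := by
    intro n i
    rw [hu]
    exact InnerProductSpace.gramSchmidtOrthonormalBasis_apply hcard
      (by
        have := InnerProductSpace.gramSchmidt_ne_zero i (hind n)
        simp [InnerProductSpace.gramSchmidtNormed, smul_eq_zero, this])
  have hulen : ∀ n i, ‖u n i‖ = 1 := by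
    intro n i
    rw [hu]; exact InnerProductSpace.gramSchmidtNormed_unit_length i (hind n)
  -- the span fact: A n (u n j) ∈ span of u (n+1) '' Iic j
  have hspan : ∀ n (j : Fin d),
      A n (u n j) ∈ Submodule.span ℝ (u (n + 1) '' Set.Iic j) := by
    intro n j
    have h1 : u n j ∈ Submodule.span ℝ (v n '' Set.Iic j) := by
      have : u n j ∈ Submodule.span ℝ (InnerProductSpace.gramSchmidtNormed ℝ (v n) '' Set.Iic j) := by
        rw [hu]
        exact Submodule.subset_span ⟨j, Set.mem_Iic.2 le_rfl, rfl⟩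
      rwa [InnerProductSpace.span_gramSchmidtNormed, InnerProductSpace.span_gramSchmidt_Iic] at this
    have h2 : A n (u n j) ∈ Submodule.span ℝ ((A n) '' (v n '' Set.Iic j)) :=
      Submodule.apply_mem_span_image_of_mem_span ((A n).toLinearEquiv.toLinearMap) h1
    have himg : (A n) '' (v n '' Set.Iic j) = v (n + 1) '' Set.Iic j := by
      rw [Set.image_image]
      refine Set.image_congr fun i _ => ?_
      exact (hrec n (l i)).symm
    rw [himg] at h2
    have h3 : Submodule.span ℝ (v (n + 1) '' Set.Iic j)
        = Submodule.span ℝ (u (n + 1) '' Set.Iic j) := by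
      rw [hu, InnerProductSpace.span_gramSchmidtNormed, InnerProductSpace.span_gramSchmidt_Iic]
    rwa [h3] at h2
  have horth : ∀ n, Orthonormal ℝ (u n) := by
    intro n; rw [hu]; exact InnerProductSpace.gramSchmidtNormed_orthonormal (hind n)
  -- upper triangularity
  have htri : ∀ n, ∀ i j : Fin d, j < i → B n i j = 0 := by
    intro n i j hij
    rw [hB]
    have hker : Submodule.span ℝ (u (n + 1) '' Set.Iic j)
        ≤ LinearMap.ker ((innerSL ℝ (u (n + 1) i) : Euc d →L[ℝ] ℝ) : Euc d →ₗ[ℝ] ℝ) := by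
      rw [Submodule.span_le]
      rintro x ⟨m, hm, rfl⟩
      have hne : i ≠ m := fun h => absurd hij (by rw [h]; exact not_lt.2 hm)
      simpa using (horth (n + 1)).2 hne
    exact hker (hspan n j)
  -- B n as a change-of-basis matrix
  have hBM : ∀ n, B n = LinearMap.toMatrix (b n).toBasis (b (n + 1)).toBasis
      ((A n).toLinearEquiv.toLinearMap) := by
    intro n
    ext i j
    rw [hB, LinearMap.toMatrix_apply]
    rw [OrthonormalBasis.coe_toBasis_repr_apply, (b (n + 1)).repr_apply_apply]
    rw [OrthonormalBasis.coe_toBasis, hbu, hbu]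
    rfl
  set M' : ℕ → Matrix (Fin d) (Fin d) ℝ := fun n =>
    LinearMap.toMatrix (b (n + 1)).toBasis (b n).toBasis
      ((A n).symm.toLinearEquiv.toLinearMap) with hM'
  have hright : ∀ n, B n * M' n = 1 := by
    intro n
    rw [hBM, hM', ← LinearMap.toMatrix_comp (b (n + 1)).toBasis (b n).toBasis (b (n + 1)).toBasis]
    have : (A n).toLinearEquiv.toLinearMap.comp (A n).symm.toLinearEquiv.toLinearMap
        = LinearMap.id := by
      ext x; simp
    rw [this, LinearMap.toMatrix_id]
  have hleft : ∀ n, M' n * B n = 1 := by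
    intro n
    rw [hBM, hM', ← LinearMap.toMatrix_comp (b n).toBasis (b (n + 1)).toBasis (b n).toBasis]
    have : (A n).symm.toLinearEquiv.toLinearMap.comp (A n).toLinearEquiv.toLinearMap
        = LinearMap.id := by
      ext x; simp
    rw [this, LinearMap.toMatrix_id]
  have hunit : ∀ n, IsUnit (B n) := fun n =>
    ⟨⟨B n, M' n, hright n, hleft n⟩, rfl⟩
  have hinv : ∀ n, (B n)⁻¹ = M' n := fun n => Matrix.inv_eq_right_inv (hright n)
  have hM'entry : ∀ n i j, M' n i j = ⟪u n i, (A n).symm (u (n + 1) j)⟫ := by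
    intro n i j
    simp only [hM']
    rw [LinearMap.toMatrix_apply, OrthonormalBasis.coe_toBasis_repr_apply,
      (b n).repr_apply_apply, OrthonormalBasis.coe_toBasis, hbu, hbu]
    rfl
  obtain ⟨⟨C1, hC1⟩, ⟨C2, hC2⟩⟩ := hA
  refine ⟨htri, hunit, ⟨C1, ?_⟩, ⟨C2, ?_⟩⟩
  · intro n i j
    rw [hB]
    exact le_trans (aux_inner_bound ((A n : Euc d →L[ℝ] Euc d)) _ _ (hulen _ _) (hulen _ _))
      (hC1 n)
  · intro n i j
    rw [hinv, hM'entry]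
    exact le_trans
      (aux_inner_bound (((A n).symm : Euc d →L[ℝ] Euc d)) _ _ (hulen _ _) (hulen _ _))
      (hC2 n)
end
end

section
/- Let A ∈ 𝓛^Lya(ℕ, ℝ^{d×d}), ε ∈ (0, π/2), k, m ∈ ℕ with 1 ≤ k < m, and x₀ ∈ ℝ^d \ {0}. Then there exists a sequence (Q(n)) of d×d matrices with Q(n) = 0 for n ≠ k−1, ‖Q(k−1)‖ ≤ ε‖A(k−1)‖, A + Q ∈ 𝓛^Lya(ℕ, ℝ^{d×d}), such that the solution (z(n)) of z(n+1) = (A(n)+Q(n))z(n) with z(k−1) = Φ_A(k−1,0)x₀ satisfies ‖z(m)‖ ≥ (sin ε / 2) ‖Φ_A(m,k)‖ ‖z(k)‖ and ‖z(k)‖ = ‖Φ_A(k,0)x₀‖. (Forward Millionshikov Rotation Method.) -/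
open Real Filter

noncomputable section

variable {d : ℕ}

section MilAux
open RealInnerProductSpace

-- norm attainment
lemma exists_norm_attained {d : ℕ} [Nontrivial (Euc d)] (T : Euc d →L[ℝ] Euc d) :
    ∃ y : Euc d, ‖y‖ = 1 ∧ ‖T y‖ = ‖T‖ := by
  obtain ⟨y, hy, hmax⟩ := (isCompact_sphere (0 : Euc d) 1).exists_isMaxOn
    (NormedSpace.sphere_nonempty.mpr zero_le_one)
    (Continuous.continuousOn (by continuity : Continuous fun z : Euc d => ‖T z‖))
  rw [mem_sphere_zero_iff_norm] at hy
  refine ⟨y, hy, le_antisymm (by simpa [hy] using T.le_opNorm y) ?_⟩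
  refine T.opNorm_le_bound (norm_nonneg _) (fun z => ?_)
  rcases eq_or_ne z 0 with rfl | hz
  · simp
  · have hmem : (‖z‖⁻¹ • z) ∈ Metric.sphere (0 : Euc d) 1 := by
      simp [norm_smul, abs_of_nonneg, inv_mul_cancel₀ (norm_ne_zero_iff.mpr hz)]
    have := hmax hmem
    simp only [Set.mem_setOf_eq, map_smul, norm_smul, norm_inv, norm_norm] at this
    have hzpos : (0:ℝ) < ‖z‖ := norm_pos_iff.mpr hz
    calc ‖T z‖ = ‖z‖ * (‖z‖⁻¹ * ‖T z‖) := by field_simp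
    _ ≤ ‖z‖ * ‖T y‖ := by
        apply mul_le_mul_of_nonneg_left _ hzpos.le
        simpa using this
    _ = ‖T y‖ * ‖z‖ := mul_comm _ _


/-- the "rotation generator" map -/
def rotMap {d : ℕ} (u w : Euc d) (c t : ℝ) : Euc d →L[ℝ] Euc d :=
  ContinuousLinearMap.id ℝ (Euc d)
    + (c - 1) • ((innerSL ℝ u).smulRight u + (innerSL ℝ w).smulRight w)
    + t • ((innerSL ℝ u).smulRight w - (innerSL ℝ w).smulRight u)

lemma rotMap_apply {d : ℕ} (u w : Euc d) (c t : ℝ) (z : Euc d) :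
    rotMap u w c t z = z + ((c-1) * ⟪u, z⟫ - t * ⟪w, z⟫) • u
      + ((c-1) * ⟪w, z⟫ + t * ⟪u, z⟫) • w := by
  simp only [rotMap, ContinuousLinearMap.add_apply, ContinuousLinearMap.smul_apply,
    ContinuousLinearMap.id_apply, ContinuousLinearMap.sub_apply,
    ContinuousLinearMap.smulRight_apply, innerSL_apply_apply]
  module

variable {d : ℕ} {u w : Euc d} (huu : ⟪u, u⟫ = 1) (hww : ⟪w, w⟫ = 1) (huw : ⟪u, w⟫ = 0)

include huu hww huw in
lemma rotMap_inv (c t : ℝ) (hct : c^2 + t^2 = 1) (z : Euc d) :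
    rotMap u w c (-t) (rotMap u w c t z) = z := by
  have hwu : ⟪w, u⟫ = 0 := by rw [real_inner_comm]; exact huw
  simp only [rotMap_apply, inner_add_right, inner_smul_right, huu, hww, huw, hwu]
  match_scalars
  any_goals ring
  · linear_combination (inner ℝ u z : ℝ) * hct
  · linear_combination (inner ℝ w z : ℝ) * hct

include huu hww huw in
lemma combo_sq (p q : ℝ) : ‖p • u + q • w‖^2 = p^2 + q^2 := by
  have hwu : ⟪w, u⟫ = 0 := by rw [real_inner_comm]; exact huw
  rw [← real_inner_self_eq_norm_sq]
  simp only [inner_add_left, inner_add_right, real_inner_smul_left, real_inner_smul_right,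
    huu, hww, huw, hwu]
  ring

include huu hww huw in
lemma bessel2 (z : Euc d) : ⟪u, z⟫^2 + ⟪w, z⟫^2 ≤ ‖z‖^2 := by
  have hwu : ⟪w, u⟫ = 0 := by rw [real_inner_comm]; exact huw
  have hzu : ⟪z, u⟫ = ⟪u, z⟫ := real_inner_comm _ _
  have hzw : ⟪z, w⟫ = ⟪w, z⟫ := real_inner_comm _ _
  have h := real_inner_self_nonneg (F := Euc d) (x := z - ⟪u, z⟫ • u - ⟪w, z⟫ • w)
  simp only [inner_sub_left, inner_sub_right, real_inner_smul_left, real_inner_smul_right,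
    huu, hww, huw, hwu, hzu, hzw] at h
  rw [real_inner_self_eq_norm_sq] at h
  nlinarith [h]

include huu hww huw in
lemma rotMap_sub_le (c t ε : ℝ) (hε : 0 ≤ ε) (hct : (c-1)^2 + t^2 ≤ ε^2) (z : Euc d) :
    ‖rotMap u w c t z - z‖ ≤ ε * ‖z‖ := by
  have key : rotMap u w c t z - z
      = ((c-1) * ⟪u, z⟫ - t * ⟪w, z⟫) • u + ((c-1) * ⟪w, z⟫ + t * ⟪u, z⟫) • w := by
    rw [rotMap_apply]; abel
  have h1 : ‖rotMap u w c t z - z‖^2 ≤ (ε * ‖z‖)^2 := by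
    rw [key, combo_sq huu hww huw]
    have hb := bessel2 huu hww huw z
    nlinarith [sq_nonneg (⟪u, z⟫ : ℝ), sq_nonneg (⟪w, z⟫ : ℝ), sq_nonneg ((c-1) * ⟪w, z⟫ + t * ⟪u, z⟫), norm_nonneg z, sq_nonneg ε]
  calc ‖rotMap u w c t z - z‖ = Real.sqrt (‖rotMap u w c t z - z‖^2) :=
        (Real.sqrt_sq (norm_nonneg _)).symm
  _ ≤ Real.sqrt ((ε * ‖z‖)^2) := Real.sqrt_le_sqrt h1
  _ = ε * ‖z‖ := Real.sqrt_sq (by positivity)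

include huu huw in
lemma rotMap_apply_u (c t : ℝ) : rotMap u w c t u = c • u + t • w := by
  have hwu : ⟪w, u⟫ = 0 := by rw [real_inner_comm]; exact huw
  rw [rotMap_apply, huu, hwu]
  module

lemma norm_eq_one_of_sq {v : Euc d} (h : ‖v‖^2 = 1) : ‖v‖ = 1 := by
  nlinarith [norm_nonneg v]

set_option maxHeartbeats 1000000 in
lemma exists_good_rotation {d : ℕ} [Nontrivial (Euc d)] (Φ : Euc d →L[ℝ] Euc d)
    (hΦ : 0 < ‖Φ‖) (ε : ℝ) (hε0 : 0 < ε) (hε2 : ε < π / 2) (x : Euc d) (hx : x ≠ 0) :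
    ∃ R : Euc d ≃L[ℝ] Euc d, (∀ z, ‖R z - z‖ ≤ ε * ‖z‖) ∧ ‖R x‖ = ‖x‖ ∧
      Real.sin ε / 2 * ‖Φ‖ * ‖x‖ ≤ ‖Φ (R x)‖ := by
  have hxn : (0:ℝ) < ‖x‖ := norm_pos_iff.mpr hx
  obtain ⟨u, hu_def⟩ : ∃ u : Euc d, u = ‖x‖⁻¹ • x := ⟨_, rfl⟩
  have hxu : x = ‖x‖ • u := by
    rw [hu_def, smul_smul, mul_inv_cancel₀ hxn.ne', one_smul]
  have hu : ‖u‖ = 1 := by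
    rw [hu_def, norm_smul, norm_inv, norm_norm, inv_mul_cancel₀ hxn.ne']
  have hsε : 0 < Real.sin ε := Real.sin_pos_of_pos_of_lt_pi hε0 (by linarith [pi_pos])
  have hsε1 : Real.sin ε ≤ 1 := Real.sin_le_one ε
  by_cases hcase : Real.sin ε / 2 * ‖Φ‖ ≤ ‖Φ u‖
  · refine ⟨ContinuousLinearEquiv.refl ℝ (Euc d), ?_, by simp, ?_⟩
    · intro z; simp only [ContinuousLinearEquiv.refl_apply, sub_self, norm_zero]
      positivity
    · simp only [ContinuousLinearEquiv.refl_apply]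
      have : ‖Φ x‖ = ‖x‖ * ‖Φ u‖ := by
        conv_lhs => rw [hxu]
        rw [map_smul, norm_smul, norm_norm]
      rw [this]; nlinarith
  · push_neg at hcase
    obtain ⟨y, hy1, hyΦ⟩ := exists_norm_attained Φ
    obtain ⟨c0, hc0_def⟩ : ∃ c0 : ℝ, c0 = ⟪u, y⟫ := ⟨_, rfl⟩
    obtain ⟨yp, hyp_def⟩ : ∃ yp : Euc d, yp = y - c0 • u := ⟨_, rfl⟩
    have hc0 : |c0| ≤ 1 := by
      rw [hc0_def]
      simpa [hu, hy1] using abs_real_inner_le_norm u y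
    have hyp_ne : yp ≠ 0 := by
      intro h0
      have hy_eq : y = c0 • u := by rwa [hyp_def, sub_eq_zero] at h0
      have : ‖Φ y‖ ≤ ‖Φ u‖ := by
        rw [hy_eq, map_smul, norm_smul]
        calc |c0| * ‖Φ u‖ ≤ 1 * ‖Φ u‖ :=
          mul_le_mul_of_nonneg_right hc0 (norm_nonneg _)
        _ = ‖Φ u‖ := one_mul _
      rw [hyΦ] at this
      nlinarith
    obtain ⟨s0, hs0_def⟩ : ∃ s0 : ℝ, s0 = ‖yp‖ := ⟨_, rfl⟩
    have hs0 : (0:ℝ) < s0 := hs0_def ▸ norm_pos_iff.mpr hyp_ne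
    obtain ⟨w, hw_def⟩ : ∃ w : Euc d, w = s0⁻¹ • yp := ⟨_, rfl⟩
    have huu : ⟪u, u⟫ = 1 := by rw [real_inner_self_eq_norm_sq, hu]; norm_num
    have hup : ⟪u, yp⟫ = 0 := by
      rw [hyp_def, inner_sub_right, real_inner_smul_right, huu, ← hc0_def]; ring
    have huw : ⟪u, w⟫ = 0 := by rw [hw_def, real_inner_smul_right, hup, mul_zero]
    have hwn : ‖w‖ = 1 := by
      rw [hw_def, norm_smul, norm_inv, Real.norm_eq_abs, abs_of_pos hs0, ← hs0_def,
        inv_mul_cancel₀ hs0.ne']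
    have hww : ⟪w, w⟫ = 1 := by rw [real_inner_self_eq_norm_sq, hwn]; norm_num
    have hdecomp : y = c0 • u + s0 • w := by
      rw [hw_def, smul_smul, mul_inv_cancel₀ hs0.ne', one_smul, hyp_def]
      abel
    have hcs0 : c0^2 + s0^2 = 1 := by
      have := combo_sq huu hww huw c0 s0
      rw [← hdecomp, hy1] at this
      nlinarith
    have hs0le : s0 ≤ 1 := by nlinarith
    have hΦw : ‖Φ‖ / 2 ≤ ‖Φ w‖ := by
      have htri : ‖Φ y‖ ≤ |c0| * ‖Φ u‖ + s0 * ‖Φ w‖ := by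
        rw [hdecomp, map_add, map_smul, map_smul]
        calc ‖c0 • Φ u + s0 • Φ w‖ ≤ ‖c0 • Φ u‖ + ‖s0 • Φ w‖ := norm_add_le _ _
        _ = |c0| * ‖Φ u‖ + |s0| * ‖Φ w‖ := by rw [norm_smul, norm_smul]; rfl
        _ = |c0| * ‖Φ u‖ + s0 * ‖Φ w‖ := by rw [abs_of_pos hs0]
      rw [hyΦ] at htri
      nlinarith [norm_nonneg (Φ u), norm_nonneg (Φ w)]
    obtain ⟨c, hc_def⟩ : ∃ c : ℝ, c = Real.cos ε := ⟨_, rfl⟩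
    obtain ⟨s, hs_def⟩ : ∃ s : ℝ, s = Real.sin ε := ⟨_, rfl⟩
    have hpyth : c^2 + s^2 = 1 := by
      rw [hc_def, hs_def, add_comm]; exact Real.sin_sq_add_cos_sq ε
    -- choose sign
    have hsign : ∃ t : ℝ, t^2 = s^2 ∧ s * ‖Φ w‖ ≤ ‖c • Φ u + t • Φ w‖ := by
      by_cases hsgn : s * ‖Φ w‖ ≤ ‖c • Φ u + s • Φ w‖
      · exact ⟨s, rfl, hsgn⟩
      · refine ⟨-s, by ring, ?_⟩
        have hdiff : (c • Φ u + s • Φ w) - (c • Φ u + (-s) • Φ w) = (2*s) • Φ w := by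
          module
        have h2 : ‖(2*s) • Φ w‖ = 2 * s * ‖Φ w‖ := by
          rw [norm_smul]
          rw [Real.norm_eq_abs, abs_of_pos (by linarith : (0:ℝ) < 2*s)]
        have := norm_sub_le (c • Φ u + s • Φ w) (c • Φ u + (-s) • Φ w)
        rw [hdiff, h2] at this
        push_neg at hsgn
        linarith
    obtain ⟨t, ht2, hb⟩ := hsign
    have hct : c^2 + t^2 = 1 := by rw [ht2]; exact hpyth
    -- (c-1)^2 + t^2 ≤ ε^2
    have hsmall : (c-1)^2 + t^2 ≤ ε^2 := by
      have h1 : Real.sin (ε/2) ^ 2 = 1/2 - c/2 := by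
        rw [Real.sin_sq, Real.cos_sq, hc_def, show 2*(ε/2) = ε by ring]
        ring
      have h2 : Real.sin (ε/2) ≤ ε/2 := Real.sin_le (by linarith)
      have h3 : 0 ≤ Real.sin (ε/2) :=
        Real.sin_nonneg_of_nonneg_of_le_pi (by linarith) (by linarith [pi_pos])
      nlinarith [ht2, hpyth]
    -- build the rotation
    have hinv1 : Function.LeftInverse (rotMap u w c (-t)) (rotMap u w c t) :=
      fun z => rotMap_inv huu hww huw c t hct z
    have hinv2 : Function.RightInverse (rotMap u w c (-t)) (rotMap u w c t) := by
      intro z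
      have := rotMap_inv huu hww huw c (-t) (by rw [neg_pow]; simpa using hct) z
      rwa [neg_neg] at this
    refine ⟨ContinuousLinearEquiv.equivOfInverse (rotMap u w c t) (rotMap u w c (-t))
      hinv1 hinv2, ?_, ?_, ?_⟩
    · intro z
      exact rotMap_sub_le huu hww huw c t ε hε0.le hsmall z
    · show ‖rotMap u w c t x‖ = ‖x‖
      conv_lhs => rw [hxu]
      rw [map_smul, rotMap_apply_u huu huw, norm_smul, norm_norm]
      have : ‖c • u + t • w‖ = 1 := by
        apply norm_eq_one_of_sq
        rw [combo_sq huu hww huw]; exact hct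
      rw [this, mul_one]
    · show Real.sin ε / 2 * ‖Φ‖ * ‖x‖ ≤ ‖Φ (rotMap u w c t x)‖
      conv_rhs => rw [hxu]
      rw [map_smul, rotMap_apply_u huu huw, map_smul, norm_smul, norm_norm]
      have hexp : Φ (c • u + t • w) = c • Φ u + t • Φ w := by
        rw [map_add, map_smul, map_smul]
      rw [hexp]
      have : s * (‖Φ‖/2) ≤ ‖c • Φ u + t • Φ w‖ := by
        calc s * (‖Φ‖/2) ≤ s * ‖Φ w‖ := by
              exact mul_le_mul_of_nonneg_left hΦw (by rw [hs_def]; exact hsε.le)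
        _ ≤ _ := hb
      rw [hs_def] at this
      nlinarith

end MilAux


section MilPhi

lemma Phi_of_le (A : ℕ → (Euc d ≃L[ℝ] Euc d)) {n m : ℕ} (h : m ≤ n) :
    Phi A n m = fwd A m (n - m) := by simp [Phi, h]

lemma Phi_succ_zero (A : ℕ → (Euc d ≃L[ℝ] Euc d)) (j : ℕ) :
    Phi A (j+1) 0 = (Phi A j 0).trans (A j) := by
  rw [Phi_of_le A (Nat.zero_le _), Phi_of_le A (Nat.zero_le _)]
  simp [fwd]

lemma sol_eq (A A' : ℕ → (Euc d ≃L[ℝ] Euc d)) (k : ℕ)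
    (hAA : ∀ n, k ≤ n → A' n = A n) (z : ℕ → Euc d)
    (hz : ∀ n, z (n + 1) = A' n (z n)) (j : ℕ) :
    z (k + j) = fwd A k j (z k) := by
  induction j with
  | zero => simp [fwd]
  | succ j ih =>
      rw [← Nat.add_assoc, hz (k + j), ih, hAA (k + j) (Nat.le_add_right _ _)]
      rfl

end MilPhi

/-- Forward Millionshikov Rotation Method, dynamic version: for a Lyapunov
sequence `A`, `ε ∈ (0, π/2)`, `1 ≤ k < m` and `x₀ ≠ 0`, there is a perturbation `Q`
supported at `k−1` with `‖Q(k−1)‖ ≤ ε‖A(k−1)‖`, `A + Q` Lyapunov, such that the solution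
`z` of the perturbed system with `z(k−1) = Φ_A(k−1,0)x₀` satisfies
`‖z(m)‖ ≥ (sin ε/2)‖Φ_A(m,k)‖‖z(k)‖` and `‖z(k)‖ = ‖Φ_A(k,0)x₀‖`. -/
theorem forward_millionshikov_rotation (dd : ℕ)
    (A : ℕ → (Euc dd ≃L[ℝ] Euc dd)) (hA : IsLyapunov A)
    (ε : ℝ) (hε : ε ∈ Set.Ioo 0 (π / 2))
    (k m : ℕ) (hk : 1 ≤ k) (hkm : k < m)
    (x0 : Euc dd) (hx0 : x0 ≠ 0) :
    ∃ Q : ℕ → (Euc dd →L[ℝ] Euc dd),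
      (∀ n, n ≠ k - 1 → Q n = 0) ∧
      ‖Q (k - 1)‖ ≤ ε * ‖(A (k - 1) : Euc dd →L[ℝ] Euc dd)‖ ∧
      ∃ A' : ℕ → (Euc dd ≃L[ℝ] Euc dd),
        (∀ n, (A' n : Euc dd →L[ℝ] Euc dd) = (A n : Euc dd →L[ℝ] Euc dd) + Q n) ∧
        IsLyapunov A' ∧
        ∀ z : ℕ → Euc dd, (∀ n, z (n + 1) = A' n (z n)) → z (k - 1) = Phi A (k - 1) 0 x0 →
          ‖z m‖ ≥ Real.sin ε / 2 * ‖(Phi A m k : Euc dd →L[ℝ] Euc dd)‖ * ‖z k‖ ∧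
          ‖z k‖ = ‖Phi A k 0 x0‖ := by
  obtain ⟨hε0, hε2⟩ := hε
  haveI : Nontrivial (Euc dd) := nontrivial_of_ne x0 0 hx0
  obtain ⟨Φ, hΦ_def⟩ : ∃ Φ : Euc dd →L[ℝ] Euc dd, Φ = (Phi A m k : Euc dd →L[ℝ] Euc dd) :=
    ⟨_, rfl⟩
  have hΦpos : 0 < ‖Φ‖ := by
    rw [norm_pos_iff]
    intro h0
    obtain ⟨e, he⟩ := exists_ne (0 : Euc dd)
    apply he
    have h1 : Φ e = 0 := by rw [h0]; rfl
    rw [hΦ_def] at h1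
    exact (Phi A m k).map_eq_zero_iff.mp h1
  obtain ⟨x, hx_def⟩ : ∃ x : Euc dd, x = Phi A k 0 x0 := ⟨_, rfl⟩
  have hx : x ≠ 0 := by
    rw [hx_def]
    intro h0
    exact hx0 ((Phi A k 0).map_eq_zero_iff.mp h0)
  obtain ⟨R, hR1, hR2, hR3⟩ := exists_good_rotation Φ hΦpos ε hε0 hε2 x hx
  have hk1 : (k - 1) + 1 = k := Nat.succ_pred_eq_of_pos hk
  obtain ⟨A', hA'⟩ : ∃ A' : ℕ → (Euc dd ≃L[ℝ] Euc dd),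
      A' = fun n => if n = k - 1 then (A (k-1)).trans R else A n := ⟨_, rfl⟩
  have hA'k : A' (k-1) = (A (k-1)).trans R := by rw [hA']; simp
  have hA'n : ∀ n, n ≠ k - 1 → A' n = A n := by
    intro n hn; rw [hA']; simp [hn]
  refine ⟨fun n => if n = k - 1 then
      (A' (k-1) : Euc dd →L[ℝ] Euc dd) - (A (k-1) : Euc dd →L[ℝ] Euc dd) else 0,
      fun n hn => if_neg hn, ?_, ?_⟩
  · simp only [↓reduceIte]
    apply ContinuousLinearMap.opNorm_le_bound _ (by positivity)
    intro z
    have h1 : ((A' (k-1) : Euc dd →L[ℝ] Euc dd)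
        - (A (k-1) : Euc dd →L[ℝ] Euc dd)) z = R (A (k-1) z) - A (k-1) z := by
      rw [hA'k]; rfl
    rw [h1]
    calc ‖R (A (k-1) z) - A (k-1) z‖ ≤ ε * ‖A (k-1) z‖ := hR1 _
    _ ≤ ε * (‖(A (k-1) : Euc dd →L[ℝ] Euc dd)‖ * ‖z‖) :=
        mul_le_mul_of_nonneg_left ((A (k-1) : Euc dd →L[ℝ] Euc dd).le_opNorm z) hε0.le
    _ = ε * ‖(A (k-1) : Euc dd →L[ℝ] Euc dd)‖ * ‖z‖ := by ring
  · refine ⟨A', ?_, ?_, ?_⟩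
    · intro n
      by_cases hn : n = k - 1
      · subst hn
        simp only [↓reduceIte]
        abel
      · simp only [if_neg hn, add_zero]
        rw [hA'n n hn]
    · obtain ⟨⟨C1, h1⟩, ⟨C2, h2⟩⟩ := hA
      constructor
      · refine ⟨max C1 ‖(A' (k-1) : Euc dd →L[ℝ] Euc dd)‖, fun n => ?_⟩
        by_cases hn : n = k - 1
        · rw [hn]; exact le_max_right _ _
        · rw [hA'n n hn]; exact (h1 n).trans (le_max_left _ _)
      · refine ⟨max C2 ‖((A' (k-1)).symm : Euc dd →L[ℝ] Euc dd)‖, fun n => ?_⟩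
        by_cases hn : n = k - 1
        · rw [hn]; exact le_max_right _ _
        · rw [hA'n n hn]; exact (h2 n).trans (le_max_left _ _)
    · intro z hz hzk1
      have hcomp : A (k-1) (Phi A (k-1) 0 x0) = x := by
        rw [hx_def]
        conv_rhs => rw [← hk1]
        rw [Phi_succ_zero]
        rfl
      have hzk : z k = R x := by
        have h1 : z k = A' (k-1) (z (k-1)) := by
          conv_lhs => rw [← hk1]
          exact hz (k-1)
        rw [h1, hzk1, hA'k]
        show R (A (k-1) (Phi A (k-1) 0 x0)) = R x
        rw [hcomp]
      have hzknorm : ‖z k‖ = ‖Phi A k 0 x0‖ := by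
        rw [hzk, hR2, hx_def]
      refine ⟨?_, hzknorm⟩
      have hzm : z m = Phi A m k (z k) := by
        have hAA : ∀ n, k ≤ n → A' n = A n := fun n hn => hA'n n (by omega)
        have h2 := sol_eq A A' k hAA z hz (m - k)
        rw [Nat.add_sub_cancel' hkm.le] at h2
        rw [h2, Phi_of_le A hkm.le]
      have hPhiR : Phi A m k (R x) = Φ (R x) := by rw [hΦ_def]; rfl
      rw [ge_iff_le, hzm, hzk, hPhiR, hR2, ← hΦ_def]
      exact hR3
end
end

section
/- Let n, m ∈ ℕ with m < n, B(m), …, B(n) ∈ GL(k, ℝ), v ∈ ℝ^k, and ε ∈ (0, π/2). Then there exists R ∈ ℝ^{k×k} such that: (i) ‖R‖ ≤ ε · max{‖B(m)‖, ‖B(m)⁻¹‖}; (ii) B(m) + R ∈ GL(k, ℝ); (iii) ‖B(n)⋯B(m+1)(B(m)+R)v‖ ≥ (sin ε / 2) ‖B(n)⋯B(m+1)‖ · ‖B(m)v‖; (iv) ‖B(m)v‖ = ‖(B(m)+R)v‖. (Algebraic forward Millionshikov Rotation Method.) -/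
open Real Filter

noncomputable section

variable {d : ℕ}

/-! Write `P = B(n)⋯B(m+1)`, `u = B(m)v` and `û = u / ‖u‖`. If `‖P u‖ ≥ ‖P‖‖u‖/2`, take
`R = 0`. Otherwise project a unit vector almost maximising `‖P ·‖` orthogonally to `u`: this gives
a unit `e ⊥ u` with `‖P e‖ > ‖P‖/2`, and one of `cos ε û ± sin ε e` is expanded by at least
`sin ε ‖P e‖`, since they differ by `2 sin ε e`. The rotation `V` by `ε` in the plane of `û` and `e`
carries `û` there, and `‖V - 1‖ = 2 sin (ε/2) ≤ ε`, so `R = (V - 1) B(m)` works. -/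

open scoped RealInnerProductSpace

lemma norm_le_max_norm_add_norm_sub {F : Type*} [SeminormedAddCommGroup F] [NormedSpace ℝ F]
    (x y : F) : ‖y‖ ≤ max ‖x + y‖ ‖x - y‖ := by
  have h : (2 : ℝ) * ‖y‖ ≤ ‖x + y‖ + ‖x - y‖ := by
    calc (2 : ℝ) * ‖y‖ = ‖(x + y) - (x - y)‖ := by
          rw [show (x + y) - (x - y) = (2 : ℝ) • y by module, norm_smul, Real.norm_two]
      _ ≤ ‖x + y‖ + ‖x - y‖ := norm_sub_le _ _
  linarith [le_max_left ‖x + y‖ ‖x - y‖, le_max_right ‖x + y‖ ‖x - y‖]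

section PlaneRotation

variable {E : Type*} [NormedAddCommGroup E] [InnerProductSpace ℝ E]

/-- The rotation by `θ` in the plane of an orthonormal pair `u, e` (from `u` towards `e`),
fixing the orthogonal complement of that plane. -/
def planeRotation (u e : E) (θ : ℝ) : E →L[ℝ] E :=
  ContinuousLinearMap.id ℝ E + (innerSL ℝ u).smulRight ((cos θ - 1) • u + sin θ • e)
    + (innerSL ℝ e).smulRight ((cos θ - 1) • e - sin θ • u)

variable {u e : E} (θ : ℝ)

lemma planeRotation_apply (x : E) :
    planeRotation u e θ x = x + ⟪u, x⟫ • ((cos θ - 1) • u + sin θ • e)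
      + ⟪e, x⟫ • ((cos θ - 1) • e - sin θ • u) := by
  simp [planeRotation]

lemma planeRotation_apply_left (hu : ‖u‖ = 1) (hue : ⟪u, e⟫ = 0) :
    planeRotation u e θ u = cos θ • u + sin θ • e := by
  rw [planeRotation_apply, real_inner_self_eq_norm_sq, hu, real_inner_comm, hue]
  module

lemma inner_sq_add_inner_sq_le_norm_sq (hu : ‖u‖ = 1) (he : ‖e‖ = 1) (hue : ⟪u, e⟫ = 0)
    (x : E) : ⟪u, x⟫ ^ 2 + ⟪e, x⟫ ^ 2 ≤ ‖x‖ ^ 2 := by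
  have hproj := real_inner_self_nonneg (x := x - ⟪u, x⟫ • u - ⟪e, x⟫ • e)
  simp only [inner_sub_left, inner_sub_right, real_inner_smul_left, real_inner_smul_right,
    real_inner_comm u e, real_inner_comm u x, real_inner_comm e x] at hproj
  simp only [real_inner_self_eq_norm_sq, hu, he, hue] at hproj
  linarith

lemma norm_planeRotation_apply (hu : ‖u‖ = 1) (he : ‖e‖ = 1) (hue : ⟪u, e⟫ = 0) (x : E) :
    ‖planeRotation u e θ x‖ = ‖x‖ := by
  have hsq : ‖planeRotation u e θ x‖ ^ 2 = ‖x‖ ^ 2 := by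
    simp only [← real_inner_self_eq_norm_sq, planeRotation_apply, inner_add_left,
      inner_add_right, inner_sub_left, inner_sub_right, real_inner_smul_left,
      real_inner_smul_right]
    simp only [real_inner_comm u e, real_inner_comm u x, real_inner_comm e x]
    simp only [real_inner_self_eq_norm_sq, hu, he, hue]
    linear_combination (⟪u, x⟫ ^ 2 + ⟪e, x⟫ ^ 2) * sin_sq_add_cos_sq θ
  exact (pow_left_inj₀ (norm_nonneg _) (norm_nonneg _) two_ne_zero).mp hsq

lemma norm_planeRotation_apply_sub_le (hu : ‖u‖ = 1) (he : ‖e‖ = 1) (hue : ⟪u, e⟫ = 0)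
    (x : E) : ‖planeRotation u e θ x - x‖ ≤ |θ| * ‖x‖ := by
  have hsq : ‖planeRotation u e θ x - x‖ ^ 2 = (⟪u, x⟫ ^ 2 + ⟪e, x⟫ ^ 2) * (2 - 2 * cos θ) := by
    simp only [← real_inner_self_eq_norm_sq, planeRotation_apply,
      inner_add_left, inner_add_right, inner_sub_left, inner_sub_right, real_inner_smul_left,
      real_inner_smul_right]
    simp only [real_inner_comm u e]
    simp only [real_inner_self_eq_norm_sq, hu, he, hue]
    linear_combination (⟪u, x⟫ ^ 2 + ⟪e, x⟫ ^ 2) * sin_sq_add_cos_sq θ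
  have hcos : 2 - 2 * cos θ ≤ θ ^ 2 := by linarith [one_sub_sq_div_two_le_cos (x := θ)]
  have hcos' : 0 ≤ 2 - 2 * cos θ := by linarith [cos_le_one θ]
  refine pow_le_pow_iff_left₀ (norm_nonneg _) (by positivity) two_ne_zero |>.mp ?_
  calc ‖planeRotation u e θ x - x‖ ^ 2 ≤ ‖x‖ ^ 2 * θ ^ 2 := by
        rw [hsq]
        exact mul_le_mul (inner_sq_add_inner_sq_le_norm_sq hu he hue x) hcos hcos' (sq_nonneg _)
    _ = (|θ| * ‖x‖) ^ 2 := by rw [mul_pow, sq_abs, mul_comm]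

end PlaneRotation

section FastVector

variable {E F : Type*} [NormedAddCommGroup E] [InnerProductSpace ℝ E]
  [SeminormedAddCommGroup F] [NormedSpace ℝ F]

lemma exists_orthogonal_unit_half_opNorm_lt (P : E →L[ℝ] F) {u : E} (hu : ‖u‖ = 1)
    (hPu : ‖P u‖ < ‖P‖ / 2) : ∃ e : E, ‖e‖ = 1 ∧ ⟪u, e⟫ = 0 ∧ ‖P‖ / 2 < ‖P e‖ := by
  obtain ⟨z, hz, hPz⟩ := P.exists_lt_apply_of_lt_opNorm (r := ‖P‖ / 2 + ‖P u‖) (by linarith)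
  set z' := (ℝ ∙ u)ᗮ.starProjection z with hz'
  have hz'_eq : z' = z - ⟪u, z⟫ • u := by
    rw [hz', Submodule.starProjection_orthogonal, sub_apply,
      Submodule.starProjection_unit_singleton ℝ hu, ContinuousLinearMap.id_apply]
  have hz'_orth : ⟪u, z'⟫ = 0 :=
    Submodule.mem_orthogonal_singleton_iff_inner_right.mp (Submodule.starProjection_apply_mem _ z)
  have hz'_lt : ‖z'‖ < 1 := (Submodule.norm_starProjection_apply_le _ z).trans_lt hz
  have hPz' : ‖P‖ / 2 < ‖P z'‖ := by
    have hcoef : ‖⟪u, z⟫‖ ≤ 1 :=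
      calc ‖⟪u, z⟫‖ ≤ ‖u‖ * ‖z‖ := norm_inner_le_norm u z
        _ ≤ 1 := by rw [hu, one_mul]; exact hz.le
    calc ‖P‖ / 2 < ‖P z‖ - ‖P u‖ := by linarith
      _ ≤ ‖P z‖ - ‖⟪u, z⟫ • P u‖ := by
        rw [norm_smul]; gcongr; exact mul_le_of_le_one_left (norm_nonneg _) hcoef
      _ ≤ ‖P z - ⟪u, z⟫ • P u‖ := norm_sub_norm_le _ _
      _ = ‖P z'‖ := by rw [hz'_eq, map_sub, map_smul]
  have hz'_ne : z' ≠ 0 := by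
    rintro h
    rw [h, map_zero, norm_zero] at hPz'
    linarith [norm_nonneg P]
  refine ⟨‖z'‖⁻¹ • z', norm_smul_inv_norm hz'_ne,
    by rw [real_inner_smul_right, hz'_orth, mul_zero], ?_⟩
  have hinv : 1 ≤ ‖z'‖⁻¹ := (one_le_inv₀ (norm_pos_iff.mpr hz'_ne)).mpr hz'_lt.le
  rw [map_smul, norm_smul, norm_inv, norm_norm]
  exact hPz'.trans_le (le_mul_of_one_le_left (norm_nonneg _) hinv)

lemma exists_planeRotation_fast (P : E →L[ℝ] F) {u : E} (hu : ‖u‖ = 1)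
    (hPu : ‖P u‖ < ‖P‖ / 2) {θ : ℝ} (hθ : 0 ≤ sin θ) :
    ∃ e : E, ‖e‖ = 1 ∧ ⟪u, e⟫ = 0 ∧ sin θ / 2 * ‖P‖ ≤ ‖P (planeRotation u e θ u)‖ := by
  obtain ⟨e, he, hue, hPe⟩ := exists_orthogonal_unit_half_opNorm_lt P hu hPu
  have hbound :
      sin θ / 2 * ‖P‖ ≤ max ‖P (cos θ • u + sin θ • e)‖ ‖P (cos θ • u + sin θ • -e)‖ := by
    calc sin θ / 2 * ‖P‖ ≤ ‖sin θ • P e‖ := by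
          rw [norm_smul, norm_of_nonneg hθ]; linarith [mul_le_mul_of_nonneg_left hPe.le hθ]
      _ ≤ max ‖cos θ • P u + sin θ • P e‖ ‖cos θ • P u - sin θ • P e‖ :=
          norm_le_max_norm_add_norm_sub _ _
      _ = _ := by simp [smul_neg, sub_eq_add_neg]
  rcases le_max_iff.mp hbound with h | h
  · exact ⟨e, he, hue, by rwa [planeRotation_apply_left θ hu hue]⟩
  · refine ⟨-e, by rwa [norm_neg], by rw [inner_neg_right, hue, neg_zero], ?_⟩
    rwa [planeRotation_apply_left θ hu (by rw [inner_neg_right, hue, neg_zero])]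

theorem exists_small_rotation_fast [FiniteDimensional ℝ E] (P : E →L[ℝ] F) (u : E) {ε : ℝ}
    (hε₀ : 0 ≤ ε) (hεπ : ε ≤ π) :
    ∃ V : E ≃ₗᵢ[ℝ] E, (∀ x, ‖V x - x‖ ≤ ε * ‖x‖) ∧ sin ε / 2 * ‖P‖ * ‖u‖ ≤ ‖P (V u)‖ := by
  by_cases hfast : ‖P‖ / 2 * ‖u‖ ≤ ‖P u‖
  · refine ⟨LinearIsometryEquiv.refl ℝ E, fun x => by
      rw [LinearIsometryEquiv.coe_refl, id_eq, sub_self, norm_zero]; positivity, ?_⟩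
    calc sin ε / 2 * ‖P‖ * ‖u‖ ≤ 1 / 2 * ‖P‖ * ‖u‖ := by gcongr; exact sin_le_one ε
      _ ≤ ‖P u‖ := by linarith
  push Not at hfast
  have hu : u ≠ 0 := by rintro rfl; simp at hfast
  have hu_pos : 0 < ‖u‖ := norm_pos_iff.mpr hu
  obtain ⟨û, hû_norm, hu_eq⟩ : ∃ û : E, ‖û‖ = 1 ∧ u = ‖u‖ • û :=
    ⟨‖u‖⁻¹ • u, norm_smul_inv_norm hu, by rw [smul_inv_smul₀ hu_pos.ne']⟩
  have hscale (f : E →L[ℝ] F) : ‖f u‖ = ‖u‖ * ‖f û‖ := by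
    conv_lhs => rw [hu_eq]
    rw [map_smul, norm_smul, norm_norm]
  have hPû : ‖P û‖ < ‖P‖ / 2 := by
    rw [← mul_lt_mul_iff_right₀ hu_pos]
    linarith [hscale P]
  obtain ⟨e, he, hûe, hPe⟩ :=
    exists_planeRotation_fast P hû_norm hPû (sin_nonneg_of_nonneg_of_le_pi hε₀ hεπ)
  let V : E →ₗᵢ[ℝ] E := ⟨planeRotation û e ε, norm_planeRotation_apply ε hû_norm he hûe⟩
  refine ⟨V.toLinearIsometryEquiv rfl, fun x => ?_, ?_⟩
  · exact (norm_planeRotation_apply_sub_le ε hû_norm he hûe x).trans_eq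
      (by rw [abs_of_nonneg hε₀])
  · calc sin ε / 2 * ‖P‖ * ‖u‖ ≤ ‖P (planeRotation û e ε û)‖ * ‖u‖ :=
          mul_le_mul_of_nonneg_right hPe hu_pos.le
      _ = ‖u‖ * ‖(P ∘L planeRotation û e ε) û‖ := mul_comm _ _
      _ = ‖P (planeRotation û e ε u)‖ := (hscale _).symm

end FastVector

lemma ContinuousLinearMap.opNorm_comp_sub_le {E F : Type*} [SeminormedAddCommGroup E]
    [NormedSpace ℝ E] [SeminormedAddCommGroup F] [NormedSpace ℝ F] (V : F →L[ℝ] F)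
    (A : E →L[ℝ] F) {ε : ℝ} (hε : 0 ≤ ε) (hV : ∀ x, ‖V x - x‖ ≤ ε * ‖x‖) :
    ‖V ∘L A - A‖ ≤ ε * ‖A‖ :=
  opNorm_le_bound _ (by positivity) fun x =>
    calc ‖V (A x) - A x‖ ≤ ε * ‖A x‖ := hV (A x)
      _ ≤ ε * ‖A‖ * ‖x‖ := by rw [mul_assoc]; gcongr; exact A.le_opNorm x

theorem algebraic_forward_millionshikov_general (kk : ℕ)
    (B : ℕ → (Euc kk ≃L[ℝ] Euc kk))
    (m n : ℕ)
    (v : Euc kk) (ε : ℝ) (hε : ε ∈ Set.Ioo 0 (π / 2)) :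
    ∃ R : Euc kk →L[ℝ] Euc kk,
      ‖R‖ ≤ ε * max ‖(B m : Euc kk →L[ℝ] Euc kk)‖ ‖((B m).symm : Euc kk →L[ℝ] Euc kk)‖ ∧
      Function.Bijective ((B m : Euc kk →L[ℝ] Euc kk) + R) ∧
      ‖(fwd B (m + 1) (n - m)) (((B m : Euc kk →L[ℝ] Euc kk) + R) v)‖ ≥
        Real.sin ε / 2 * ‖(fwd B (m + 1) (n - m) : Euc kk →L[ℝ] Euc kk)‖ * ‖B m v‖ ∧
      ‖B m v‖ = ‖((B m : Euc kk →L[ℝ] Euc kk) + R) v‖ := by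
  obtain ⟨hε₀, hεπ⟩ := hε
  set A : Euc kk →L[ℝ] Euc kk := ↑(B m)
  obtain ⟨V, hV, hfast⟩ := exists_small_rotation_fast
    (fwd B (m + 1) (n - m) : Euc kk →L[ℝ] Euc kk) (A v) hε₀.le (by linarith [pi_pos])
  set W : Euc kk →L[ℝ] Euc kk := ↑V.toContinuousLinearEquiv
  have hAR : A + (W ∘L A - A) = W ∘L A := add_sub_cancel _ _
  refine ⟨W ∘L A - A, ?_, ?_, ?_, ?_⟩
  · exact (W.opNorm_comp_sub_le A hε₀.le hV).trans (by gcongr; exact le_max_left _ _)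
  · rw [hAR]
    exact V.bijective.comp (B m).bijective
  · rw [hAR]
    exact hfast
  · rw [hAR]
    exact (V.norm_map (A v)).symm

/-- Algebraic forward Millionshikov Rotation Method: given invertible
matrices `B(m),…,B(n)` (`m < n`), `v ∈ ℝ^k` and `ε ∈ (0, π/2)`, there is `R` with
(i) `‖R‖ ≤ ε·max{‖B(m)‖, ‖B(m)⁻¹‖}`, (ii) `B(m) + R` invertible,
(iii) `‖B(n)⋯B(m+1)(B(m)+R)v‖ ≥ (sin ε/2)‖B(n)⋯B(m+1)‖·‖B(m)v‖` and
(iv) `‖B(m)v‖ = ‖(B(m)+R)v‖`.  Here `B(n)⋯B(m+1) = fwd B (m+1) (n−m)`. -/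
theorem algebraic_forward_millionshikov (kk : ℕ)
    (B : ℕ → (Euc kk ≃L[ℝ] Euc kk))
    (m n : ℕ) (hmn : m < n)
    (v : Euc kk) (ε : ℝ) (hε : ε ∈ Set.Ioo 0 (π / 2)) :
    ∃ R : Euc kk →L[ℝ] Euc kk,
      ‖R‖ ≤ ε * max ‖(B m : Euc kk →L[ℝ] Euc kk)‖ ‖((B m).symm : Euc kk →L[ℝ] Euc kk)‖ ∧
      Function.Bijective ((B m : Euc kk →L[ℝ] Euc kk) + R) ∧
      ‖(fwd B (m + 1) (n - m)) (((B m : Euc kk →L[ℝ] Euc kk) + R) v)‖ ≥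
        Real.sin ε / 2 * ‖(fwd B (m + 1) (n - m) : Euc kk →L[ℝ] Euc kk)‖ * ‖B m v‖ ∧
      ‖B m v‖ = ‖((B m : Euc kk →L[ℝ] Euc kk) + R) v‖ :=
  algebraic_forward_millionshikov_general kk B m n v ε hε
end
end
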